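/- arXiv:2511.11064 — 5 statements merged into one kernel-verified Lean document; each statement's English description precedes it below -/
import Mathlib

section
/- Fix integers m, p ≥ 1. The function G₁(r) = r^m + r^p + r^{2m}(4 - 3r^m + r^{2m})/(1 - r^m)³ + (2r^{2p} - r^{3p})/(1 - r^p)² - 1/4 is strictly increasing on [0,1), satisfies G₁(0) = -1/4 < 0 and G₁(r) → +∞ as r → 1⁻; hence G₁ has a unique root in (0,1). -/
open Filter Set

private lemma aux_f_mono (x y : ℝ) (hx : 0 ≤ x) (hxy : x < y) (hy : y < 1) :
    x * (1 + x) / (1 - x) ^ 3 < y * (1 + y) / (1 - y) ^ 3 := by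
  have h1 : (0:ℝ) < (1 - x) ^ 3 := pow_pos (by linarith) 3
  have h2 : (0:ℝ) < (1 - y) ^ 3 := pow_pos (by linarith) 3
  rw [div_lt_div_iff₀ h1 h2]
  have h3 : x * (1 + x) < y * (1 + y) := by nlinarith
  have h4 : (1 - y) ^ 3 ≤ (1 - x) ^ 3 := pow_le_pow_left₀ (by linarith) (by linarith) 3
  have h6 : 0 < y * (1 + y) := by nlinarith
  nlinarith [mul_lt_mul_of_pos_right h3 h2, mul_le_mul_of_nonneg_left h4 h6.le]

private lemma aux_g_mono (x y : ℝ) (hx : 0 ≤ x) (hxy : x < y) (hy : y < 1) :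
    x / (1 - x) ^ 2 < y / (1 - y) ^ 2 := by
  have h1 : (0:ℝ) < (1 - x) ^ 2 := pow_pos (by linarith) 2
  have h2 : (0:ℝ) < (1 - y) ^ 2 := pow_pos (by linarith) 2
  rw [div_lt_div_iff₀ h1 h2]
  nlinarith [mul_pos (sub_pos.2 hxy) (sub_pos.2 (show x*y < 1 by nlinarith))]

theorem stmt_8 (m p : ℕ) (hm : 1 ≤ m) (hp : 1 ≤ p) (G : ℝ → ℝ)
    (hG : ∀ r : ℝ, G r = r ^ m + r ^ p
        + r ^ (2 * m) * (4 - 3 * r ^ m + r ^ (2 * m)) / (1 - r ^ m) ^ 3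
        + (2 * r ^ (2 * p) - r ^ (3 * p)) / (1 - r ^ p) ^ 2 - 1 / 4) :
    StrictMonoOn G (Set.Ico (0 : ℝ) 1) ∧
    G 0 = -1 / 4 ∧
    Tendsto G (nhdsWithin 1 (Set.Iio (1 : ℝ))) atTop ∧
    (∃! r : ℝ, r ∈ Set.Ioo (0 : ℝ) 1 ∧ G r = 0) := by
  -- closed form on [0,1)
  have hform : ∀ r : ℝ, 0 ≤ r → r < 1 →
      G r = r ^ m * (1 + r ^ m) / (1 - r ^ m) ^ 3 + r ^ p / (1 - r ^ p) ^ 2 - 1 / 4 := by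
    intro r hr0 hr1
    have hxm : r ^ m < 1 := pow_lt_one₀ hr0 hr1 (by omega)
    have hxp : r ^ p < 1 := pow_lt_one₀ hr0 hr1 (by omega)
    have h1 : (1 : ℝ) - r ^ m ≠ 0 := by linarith
    have h2 : (1 : ℝ) - r ^ p ≠ 0 := by linarith
    have e1 : r ^ (2 * m) = (r ^ m) ^ 2 := by rw [mul_comm, pow_mul]
    have e2 : r ^ (2 * p) = (r ^ p) ^ 2 := by rw [mul_comm, pow_mul]
    have e3 : r ^ (3 * p) = (r ^ p) ^ 3 := by rw [mul_comm, pow_mul]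
    rw [hG, e1, e2, e3]
    field_simp
    ring
  -- strict monotonicity
  have hmono : StrictMonoOn G (Set.Ico (0 : ℝ) 1) := by
    intro a ha b hb hab
    obtain ⟨ha0, ha1⟩ := ha
    obtain ⟨hb0, hb1⟩ := hb
    rw [hform a ha0 ha1, hform b hb0 hb1]
    have hm1 : a ^ m < b ^ m := pow_lt_pow_left₀ hab ha0 (by omega)
    have hp1 : a ^ p < b ^ p := pow_lt_pow_left₀ hab ha0 (by omega)
    have hbm : b ^ m < 1 := pow_lt_one₀ hb0 hb1 (by omega)
    have hbp : b ^ p < 1 := pow_lt_one₀ hb0 hb1 (by omega)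
    have t1 := aux_f_mono (a ^ m) (b ^ m) (pow_nonneg ha0 m) hm1 hbm
    have t2 := aux_g_mono (a ^ p) (b ^ p) (pow_nonneg ha0 p) hp1 hbp
    linarith
  have hG0 : G 0 = -1 / 4 := by
    rw [hG]
    simp [zero_pow (show m ≠ 0 by omega), zero_pow (show p ≠ 0 by omega),
      zero_pow (show 2 * m ≠ 0 by omega), zero_pow (show 2 * p ≠ 0 by omega),
      zero_pow (show 3 * p ≠ 0 by omega)]
    norm_num
  -- tendsto atTop
  have hnhds : ∀ᶠ r : ℝ in nhdsWithin 1 (Set.Iio 1), 0 < r ∧ r < 1 := by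
    filter_upwards [self_mem_nhdsWithin,
      eventually_nhdsWithin_of_eventually_nhds (eventually_gt_nhds (show (0:ℝ) < 1 by norm_num))]
      with r h1 h2
    exact ⟨h2, h1⟩
  have hpowm : Tendsto (fun r : ℝ => r ^ m) (nhdsWithin 1 (Set.Iio 1)) (nhds 1) :=
    Tendsto.mono_left (by simpa using (continuous_pow m).tendsto (1:ℝ)) nhdsWithin_le_nhds
  have hhalf : ∀ᶠ r : ℝ in nhdsWithin 1 (Set.Iio 1), (1/2 : ℝ) ≤ r ^ m :=
    hpowm.eventually (eventually_ge_nhds (by norm_num))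
  have hcube : Tendsto (fun r : ℝ => (1 - r ^ m) ^ 3) (nhdsWithin 1 (Set.Iio 1))
      (nhdsWithin 0 (Set.Ioi 0)) := by
    apply tendsto_nhdsWithin_of_tendsto_nhds_of_eventually_within
    · have : Tendsto (fun r : ℝ => (1 - r ^ m) ^ 3) (nhdsWithin 1 (Set.Iio 1))
          (nhds ((1 - 1) ^ 3)) := ((tendsto_const_nhds.sub hpowm).pow 3)
      simpa using this
    · filter_upwards [hnhds] with r ⟨hr0, hr1⟩
      have : r ^ m < 1 := pow_lt_one₀ hr0.le hr1 (by omega)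
      have : 0 < 1 - r ^ m := by linarith
      exact pow_pos this 3
  have hinv : Tendsto (fun r : ℝ => ((1 - r ^ m) ^ 3)⁻¹) (nhdsWithin 1 (Set.Iio 1)) atTop :=
    tendsto_inv_nhdsGT_zero.comp hcube
  have hbase : Tendsto (fun r : ℝ => (1/2 : ℝ) * ((1 - r ^ m) ^ 3)⁻¹ + (-(1/4)))
      (nhdsWithin 1 (Set.Iio 1)) atTop :=
    tendsto_atTop_add_const_right _ _ (hinv.const_mul_atTop (by norm_num))
  have htend : Tendsto G (nhdsWithin 1 (Set.Iio 1)) atTop := by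
    apply tendsto_atTop_mono' _ _ hbase
    filter_upwards [hnhds, hhalf] with r ⟨hr0, hr1⟩ hhf
    rw [hform r hr0.le hr1]
    have hxm : r ^ m < 1 := pow_lt_one₀ hr0.le hr1 (by omega)
    have hxp : r ^ p < 1 := pow_lt_one₀ hr0.le hr1 (by omega)
    have hd3 : (0:ℝ) < (1 - r ^ m) ^ 3 := pow_pos (by linarith) 3
    have hd2 : (0:ℝ) < (1 - r ^ p) ^ 2 := pow_pos (by linarith) 2
    have hg : 0 ≤ r ^ p / (1 - r ^ p) ^ 2 :=
      div_nonneg (pow_nonneg hr0.le p) hd2.le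
    have hnum : (1/2 : ℝ) ≤ r ^ m * (1 + r ^ m) := by nlinarith [pow_nonneg hr0.le m]
    have hfrac : (1/2 : ℝ) * ((1 - r ^ m) ^ 3)⁻¹ ≤ r ^ m * (1 + r ^ m) / (1 - r ^ m) ^ 3 := by
      rw [show (1/2 : ℝ) * ((1 - r ^ m) ^ 3)⁻¹ = (1/2) / (1 - r ^ m) ^ 3 from
        (div_eq_mul_inv _ _).symm]
      gcongr
    linarith
  refine ⟨hmono, hG0, htend, ?_⟩
  -- existence of a point with positive value
  obtain ⟨c, hcpos, hc01⟩ : ∃ c : ℝ, 0 < G c ∧ 0 < c ∧ c < 1 := by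
    have h1 : ∀ᶠ r : ℝ in nhdsWithin 1 (Set.Iio 1), 0 < G r := htend.eventually_gt_atTop 0
    exact (h1.and hnhds).exists
  obtain ⟨hc0, hc1⟩ := hc01
  -- continuity on [0, c]
  have hcont : ContinuousOn G (Set.Icc 0 c) := by
    have hne1 : ∀ x ∈ Set.Icc (0:ℝ) c, (1 - x ^ m) ^ 3 ≠ 0 := by
      intro x ⟨hx0, hxc⟩
      have h : x ^ m < 1 := pow_lt_one₀ hx0 (lt_of_le_of_lt hxc hc1) (by omega)
      exact (pow_pos (by linarith) 3).ne'
    have hne2 : ∀ x ∈ Set.Icc (0:ℝ) c, (1 - x ^ p) ^ 2 ≠ 0 := by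
      intro x ⟨hx0, hxc⟩
      have h : x ^ p < 1 := pow_lt_one₀ hx0 (lt_of_le_of_lt hxc hc1) (by omega)
      exact (pow_pos (by linarith) 2).ne'
    have : ContinuousOn (fun r : ℝ => r ^ m + r ^ p
        + r ^ (2 * m) * (4 - 3 * r ^ m + r ^ (2 * m)) / (1 - r ^ m) ^ 3
        + (2 * r ^ (2 * p) - r ^ (3 * p)) / (1 - r ^ p) ^ 2 - 1 / 4) (Set.Icc 0 c) := by
      apply ContinuousOn.sub
      · apply ContinuousOn.add
        · apply ContinuousOn.add
          · fun_prop
          · exact ContinuousOn.div (by fun_prop) (by fun_prop) hne1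
        · exact ContinuousOn.div (by fun_prop) (by fun_prop) hne2
      · fun_prop
    exact this.congr fun x _ => hG x
  -- IVT
  have h0c : (0:ℝ) ≤ c := hc0.le
  have hmem : (0:ℝ) ∈ Set.Ioo (G 0) (G c) := by
    constructor
    · rw [hG0]; norm_num
    · exact hcpos
  obtain ⟨r, hrIoo, hGr⟩ := intermediate_value_Ioo h0c hcont hmem
  have hr01 : r ∈ Set.Ioo (0:ℝ) 1 := ⟨hrIoo.1, lt_trans hrIoo.2 hc1⟩
  refine ⟨r, ⟨hr01, hGr⟩, ?_⟩
  rintro y ⟨hy01, hGy⟩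
  exact hmono.injOn ⟨hy01.1.le, hy01.2⟩ ⟨hr01.1.le, hr01.2⟩ (by rw [hGy, hGr])
end

section
/- Fix integers m, p ≥ 1. The function G₂(r) = r^m + r^p + (2r^{2m} - r^{3m})/(1 - r^m)² + r^{2p}/(1 - r^p) - 1/2 is strictly increasing on [0,1), satisfies G₂(0) = -1/2 and tends to +∞ as r → 1⁻; hence it has a unique root in (0,1). -/
open Filter Set

theorem stmt_9 (m p : ℕ) (hm : 1 ≤ m) (hp : 1 ≤ p) (G : ℝ → ℝ)
    (hG : ∀ r : ℝ, G r = r ^ m + r ^ p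
        + (2 * r ^ (2 * m) - r ^ (3 * m)) / (1 - r ^ m) ^ 2
        + r ^ (2 * p) / (1 - r ^ p) - 1 / 2) :
    StrictMonoOn G (Set.Ico (0 : ℝ) 1) ∧
    G 0 = -1 / 2 ∧
    Tendsto G (nhdsWithin 1 (Set.Iio (1 : ℝ))) atTop ∧
    (∃! r : ℝ, r ∈ Set.Ioo (0 : ℝ) 1 ∧ G r = 0) := by
  have hm0 : m ≠ 0 := by omega
  have hp0 : p ≠ 0 := by omega
  -- Simplified form of G on [0,1)
  have key : ∀ r ∈ Set.Ico (0:ℝ) 1,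
      G r = r^m/(1-r^m)^2 + r^p/(1-r^p) - 1/2 := by
    intro r hr
    have h1 : r^m < 1 := pow_lt_one₀ hr.1 hr.2 hm0
    have h2 : r^p < 1 := pow_lt_one₀ hr.1 hr.2 hp0
    have hm1 : (1 - r^m) ≠ 0 := by linarith
    have hp1 : (1 - r^p) ≠ 0 := by linarith
    rw [hG, show 2*m = m*2 by ring, show 3*m = m*3 by ring, show 2*p = p*2 by ring,
      pow_mul, pow_mul, pow_mul]
    field_simp
    ring
  -- Strict monotonicity
  have mono : StrictMonoOn G (Set.Ico (0:ℝ) 1) := by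
    intro a ha b hb hab
    rw [key a ha, key b hb]
    have hxa : a^m < b^m := pow_lt_pow_left₀ hab ha.1 hm0
    have hxp : a^p < b^p := pow_lt_pow_left₀ hab ha.1 hp0
    have ham : 0 ≤ a^m := pow_nonneg ha.1 m
    have hap : 0 ≤ a^p := pow_nonneg ha.1 p
    have hbm : b^m < 1 := pow_lt_one₀ hb.1 hb.2 hm0
    have hbp : b^p < 1 := pow_lt_one₀ hb.1 hb.2 hp0
    have ham1 : a^m < 1 := lt_trans hxa hbm
    have hap1 : a^p < 1 := lt_trans hxp hbp
    have h1 : a^m/(1-a^m)^2 < b^m/(1-b^m)^2 := by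
      rw [div_lt_div_iff₀ (pow_pos (by linarith) 2) (pow_pos (by linarith) 2)]
      have hab1 : a^m * b^m < 1 := by nlinarith
      nlinarith [mul_pos (sub_pos.2 hxa) (sub_pos.2 hab1)]
    have h2 : a^p/(1-a^p) < b^p/(1-b^p) := by
      rw [div_lt_div_iff₀ (by linarith) (by linarith)]
      nlinarith
    linarith
  -- Value at 0
  have h0 : G 0 = -1/2 := by
    rw [hG, zero_pow hm0, zero_pow hp0, zero_pow (show 2*m ≠ 0 by omega),
      zero_pow (show 3*m ≠ 0 by omega), zero_pow (show 2*p ≠ 0 by omega)]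
    norm_num
  -- Tendsto atTop
  have hIoo : Set.Ioo (0:ℝ) 1 ∈ nhdsWithin 1 (Set.Iio (1:ℝ)) := by
    rw [mem_nhdsWithin]
    exact ⟨Set.Ioi 0, isOpen_Ioi, by norm_num,
      by rintro x ⟨h1, h2⟩; exact ⟨h1, h2⟩⟩
  have tend : Tendsto G (nhdsWithin 1 (Set.Iio (1:ℝ))) atTop := by
    have t1 : Tendsto (fun r:ℝ => 1 - r^p) (nhdsWithin 1 (Set.Iio 1))
        (nhdsWithin 0 (Set.Ioi 0)) := by
      apply tendsto_nhdsWithin_of_tendsto_nhds_of_eventually_within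
      · have : Tendsto (fun r:ℝ => 1 - r^p) (nhds 1) (nhds (1 - 1^p)) :=
          (continuous_const.sub (continuous_pow p)).tendsto 1
        simpa using this.mono_left nhdsWithin_le_nhds
      · filter_upwards [hIoo] with r hr
        have : r^p < 1 := pow_lt_one₀ hr.1.le hr.2 hp0
        simpa using this
    have t2 : Tendsto (fun r:ℝ => (1 - r^p)⁻¹) (nhdsWithin 1 (Set.Iio 1)) atTop :=
      t1.inv_tendsto_nhdsGT_zero
    have tnum : Tendsto (fun r:ℝ => r^p) (nhdsWithin 1 (Set.Iio 1)) (nhds 1) := by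
      have := (continuous_pow p).tendsto (1:ℝ)
      simpa using this.mono_left nhdsWithin_le_nhds
    have t3 : Tendsto (fun r:ℝ => r^p * (1 - r^p)⁻¹) (nhdsWithin 1 (Set.Iio 1)) atTop :=
      Filter.Tendsto.pos_mul_atTop one_pos tnum t2
    have t4 : Tendsto (fun r:ℝ => r^p/(1-r^p) - 1/2) (nhdsWithin 1 (Set.Iio 1)) atTop := by
      simp only [div_eq_mul_inv]
      exact tendsto_atTop_add_const_right _ _ t3
    apply tendsto_atTop_mono' _ _ t4
    filter_upwards [hIoo] with r hr
    rw [key r ⟨hr.1.le, hr.2⟩]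
    have : 0 ≤ r^m/(1-r^m)^2 := div_nonneg (pow_nonneg hr.1.le m) (sq_nonneg _)
    linarith
  refine ⟨mono, by linarith [h0], tend, ?_⟩
  -- Existence of a point with G ≥ 1
  obtain ⟨c, hc1, hc2⟩ : ∃ c, (1:ℝ) ≤ G c ∧ c ∈ Set.Ioo (0:ℝ) 1 := by
    have := (tend.eventually_ge_atTop 1).and (eventually_of_mem hIoo (fun x hx => hx))
    exact this.exists
  -- Continuity
  have contF : ContinuousOn (fun r:ℝ => r^m/(1-r^m)^2 + r^p/(1-r^p) - 1/2)
      (Set.Ico (0:ℝ) 1) := by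
    apply ContinuousOn.sub _ continuousOn_const
    apply ContinuousOn.add
    · apply ContinuousOn.div (continuousOn_pow m) (by fun_prop)
      intro x hx
      have : x^m < 1 := pow_lt_one₀ hx.1 hx.2 hm0
      exact pow_ne_zero 2 (by linarith)
    · apply ContinuousOn.div (continuousOn_pow p) (by fun_prop)
      intro x hx
      have : x^p < 1 := pow_lt_one₀ hx.1 hx.2 hp0
      linarith
  have cont : ContinuousOn G (Set.Ico (0:ℝ) 1) :=
    ContinuousOn.congr contF (fun x hx => key x hx)
  have hsub : Set.Icc (0:ℝ) c ⊆ Set.Ico (0:ℝ) 1 :=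
    fun x hx => ⟨hx.1, lt_of_le_of_lt hx.2 hc2.2⟩
  have hiv : (0:ℝ) ∈ Set.Icc (G 0) (G c) := ⟨by linarith, by linarith⟩
  obtain ⟨r, hr, hGr⟩ := intermediate_value_Icc hc2.1.le (cont.mono hsub) hiv
  have hrne : r ≠ 0 := by
    intro h; rw [h, h0] at hGr; norm_num at hGr
  have hrmem : r ∈ Set.Ioo (0:ℝ) 1 :=
    ⟨lt_of_le_of_ne hr.1 (Ne.symm hrne), lt_of_le_of_lt hr.2 hc2.2⟩
  refine ⟨r, ⟨hrmem, hGr⟩, ?_⟩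
  rintro s ⟨hs, hGs⟩
  exact mono.injOn ⟨hs.1.le, hs.2⟩ ⟨hrmem.1.le, hrmem.2⟩ (by rw [hGs, hGr])
end

section
/- Let f = h + conj(g) with h(z) = z + ∑_{n≥2} aₙ zⁿ and g(z) = ∑_{n≥2} bₙ zⁿ analytic on the unit disk, and suppose |aₙ| + |bₙ| ≤ n for all n ≥ 2 (the stable-univalent coefficient bound) and d(f(0), ∂f(𝔻)) ≥ 1/4. Fix integers m, p ≥ 1 and let r ∈ [0,1) satisfy r^m + r^p + r^{2m}(4 - 3r^m + r^{2m})/(1 - r^m)³ + (2r^{2p} - r^{3p})/(1 - r^p)² ≤ 1/4. Then for any z with |z| = r and any ωₘ, ω_p with |ωₘ(z)| ≤ |z|^m, |ω_p(z)| ≤ |z|^p: |ωₘ(z)| + ∑_{n≥2} n(|aₙ|+|bₙ|)|ωₘ(z)|ⁿ + |ω_p(z)| + ∑_{n≥2}(|aₙ|+|bₙ|)|ω_p(z)|ⁿ ≤ 1/4. -/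
open ComplexConjugate

/-!
Since `|aₙ| + |bₙ| ≤ n`, `|ωₘ(z)| ≤ r^m` and `|ω_p(z)| ≤ r^p`, the two series are dominated
termwise by `∑_{n ≥ 2} n² (r^m)ⁿ` and `∑_{n ≥ 2} n (r^p)ⁿ`, and the closed forms of these are
the two rational terms in the hypothesis on `r`.
-/

section GeometricSums

variable {𝕜 : Type*} [NormedField 𝕜] {x : 𝕜}

theorem hasSum_nat_add_two_mul_pow (hx : ‖x‖ < 1) :
    HasSum (fun n : ℕ ↦ ((n : 𝕜) + 2) * x ^ (n + 2)) ((2 * x ^ 2 - x ^ 3) / (1 - x) ^ 2) := by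
  have hx1 : 1 - x ≠ 0 := sub_ne_zero.2 fun h ↦ by simp [← h] at hx
  have hterm : (fun n : ℕ ↦ ((n : 𝕜) + 2) * x ^ (n + 2)) =
      fun n ↦ x ^ 2 * (((n + 1).choose 1 : ℕ) * x ^ n + x ^ n) := by
    ext n
    rw [Nat.choose_one_right]
    push_cast
    ring
  have hsum : (2 * x ^ 2 - x ^ 3) / (1 - x) ^ 2 = x ^ 2 * (1 / (1 - x) ^ (1 + 1) + (1 - x)⁻¹) := by
    field_simp
    ring
  rw [hterm, hsum]
  exact ((hasSum_choose_mul_geometric_of_norm_lt_one 1 hx).add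
    (hasSum_geometric_of_norm_lt_one hx)).mul_left (x ^ 2)

theorem hasSum_nat_add_two_sq_mul_pow (hx : ‖x‖ < 1) :
    HasSum (fun n : ℕ ↦ ((n : 𝕜) + 2) ^ 2 * x ^ (n + 2))
      (x ^ 2 * (4 - 3 * x + x ^ 2) / (1 - x) ^ 3) := by
  have hx1 : 1 - x ≠ 0 := sub_ne_zero.2 fun h ↦ by simp [← h] at hx
  -- `(n + 2)² = 2 (n + 2).choose 2 + (n + 1).choose 1 + 1`, to use
  -- `∑ (n + k).choose k xⁿ = (1 - x)⁻ᵏ⁻¹` for `k = 2, 1, 0`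
  have hterm : (fun n : ℕ ↦ ((n : 𝕜) + 2) ^ 2 * x ^ (n + 2)) = fun n ↦
      x ^ 2 * (2 * (((n + 2).choose 2 : ℕ) * x ^ n) + ((n + 1).choose 1 : ℕ) * x ^ n + x ^ n) := by
    ext n
    have hchoose : (((n + 2).choose 2 * 2 : ℕ) : 𝕜) = (n + 2) * (n + 1) := by
      rw [← Nat.add_one_mul_choose_eq, Nat.choose_one_right]
      push_cast
      ring
    push_cast at hchoose
    rw [Nat.choose_one_right]
    push_cast
    linear_combination -(x ^ 2 * x ^ n) * hchoose
  have hsum : x ^ 2 * (4 - 3 * x + x ^ 2) / (1 - x) ^ 3 =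
      x ^ 2 * (2 * (1 / (1 - x) ^ (2 + 1)) + 1 / (1 - x) ^ (1 + 1) + (1 - x)⁻¹) := by
    field_simp
    ring
  rw [hterm, hsum]
  exact ((((hasSum_choose_mul_geometric_of_norm_lt_one 2 hx).mul_left 2).add
    (hasSum_choose_mul_geometric_of_norm_lt_one 1 hx)).add
    (hasSum_geometric_of_norm_lt_one hx)).mul_left (x ^ 2)

end GeometricSums

theorem tsum_mul_pow_le_of_hasSum {c d : ℕ → ℝ} {e : ℕ → ℕ} {s x S : ℝ}
    (hc : ∀ n, 0 ≤ c n) (hcd : ∀ n, c n ≤ d n) (hs : 0 ≤ s) (hsx : s ≤ x)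
    (hS : HasSum (fun n ↦ d n * x ^ e n) S) :
    ∑' n, c n * s ^ e n ≤ S := by
  have hle : ∀ n, c n * s ^ e n ≤ d n * x ^ e n := fun n ↦
    mul_le_mul (hcd n) (pow_le_pow_left₀ hs hsx _) (pow_nonneg hs _) ((hc n).trans (hcd n))
  have hsum : Summable fun n ↦ c n * s ^ e n :=
    .of_nonneg_of_le (fun n ↦ mul_nonneg (hc n) (pow_nonneg hs _)) hle hS.summable
  exact hasSum_le hle hsum.hasSum hS

theorem stmt_14_general (a b : ℕ → ℂ)
    (hcoef : ∀ n : ℕ, 2 ≤ n → ‖a n‖ + ‖b n‖ ≤ (n : ℝ))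
    (m p : ℕ) (hm : 1 ≤ m) (hp : 1 ≤ p) (r : ℝ) (hr0 : 0 ≤ r) (hr1 : r < 1)
    (hrle : r ^ m + r ^ p
        + r ^ (2 * m) * (4 - 3 * r ^ m + r ^ (2 * m)) / (1 - r ^ m) ^ 3
        + (2 * r ^ (2 * p) - r ^ (3 * p)) / (1 - r ^ p) ^ 2 ≤ 1 / 4) :
    ∀ z : ℂ, ‖z‖ = r → ∀ ωm ωp : ℂ → ℂ,
      ‖ωm z‖ ≤ ‖z‖ ^ m → ‖ωp z‖ ≤ ‖z‖ ^ p →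
      ‖ωm z‖ + (∑' n : ℕ, ((n + 2 : ℝ)) * (‖a (n + 2)‖ + ‖b (n + 2)‖) * ‖ωm z‖ ^ (n + 2))
        + ‖ωp z‖ + (∑' n : ℕ, (‖a (n + 2)‖ + ‖b (n + 2)‖) * ‖ωp z‖ ^ (n + 2)) ≤ 1 / 4 := by
  intro z hz ωm ωp hωm hωp
  rw [hz] at hωm hωp
  have hab (n : ℕ) : ‖a (n + 2)‖ + ‖b (n + 2)‖ ≤ n + 2 := by
    exact_mod_cast hcoef (n + 2) (by omega)
  have hpow {k : ℕ} (hk : 1 ≤ k) : ‖r ^ k‖ < 1 := by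
    rw [Real.norm_of_nonneg (by positivity)]
    exact pow_lt_one₀ hr0 hr1 (by omega)
  have hsum_m := tsum_mul_pow_le_of_hasSum
    (c := fun n : ℕ ↦ ((n : ℝ) + 2) * (‖a (n + 2)‖ + ‖b (n + 2)‖))
    (fun n ↦ by positivity)
    (fun n ↦ by rw [sq]; exact mul_le_mul_of_nonneg_left (hab n) (by positivity))
    (norm_nonneg _) hωm (hasSum_nat_add_two_sq_mul_pow (hpow hm))
  have hsum_p := tsum_mul_pow_le_of_hasSum (c := fun n : ℕ ↦ ‖a (n + 2)‖ + ‖b (n + 2)‖)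
    (fun n ↦ by positivity) hab (norm_nonneg _) hωp (hasSum_nat_add_two_mul_pow (hpow hp))
  rw [pow_mul', pow_mul', pow_mul'] at hrle
  linarith

theorem stmt_14 (a b : ℕ → ℂ) (h g f : ℂ → ℂ)
    (hh : ∀ z ∈ Metric.ball (0 : ℂ) 1, h z = z + ∑' n : ℕ, a (n + 2) * z ^ (n + 2))
    (hg : ∀ z ∈ Metric.ball (0 : ℂ) 1, g z = ∑' n : ℕ, b (n + 2) * z ^ (n + 2))
    (hf : ∀ z, f z = h z + conj (g z))
    (hcoef : ∀ n : ℕ, 2 ≤ n → ‖a n‖ + ‖b n‖ ≤ (n : ℝ))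
    (hd : (1 : ℝ) / 4 ≤ Metric.infDist (f 0) (frontier (f '' Metric.ball (0 : ℂ) 1)))
    (m p : ℕ) (hm : 1 ≤ m) (hp : 1 ≤ p) (r : ℝ) (hr0 : 0 ≤ r) (hr1 : r < 1)
    (hrle : r ^ m + r ^ p
        + r ^ (2 * m) * (4 - 3 * r ^ m + r ^ (2 * m)) / (1 - r ^ m) ^ 3
        + (2 * r ^ (2 * p) - r ^ (3 * p)) / (1 - r ^ p) ^ 2 ≤ 1 / 4) :
    ∀ z : ℂ, ‖z‖ = r → ∀ ωm ωp : ℂ → ℂ,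
      ‖ωm z‖ ≤ ‖z‖ ^ m → ‖ωp z‖ ≤ ‖z‖ ^ p →
      ‖ωm z‖ + (∑' n : ℕ, ((n + 2 : ℝ)) * (‖a (n + 2)‖ + ‖b (n + 2)‖) * ‖ωm z‖ ^ (n + 2))
        + ‖ωp z‖ + (∑' n : ℕ, (‖a (n + 2)‖ + ‖b (n + 2)‖) * ‖ωp z‖ ^ (n + 2)) ≤ 1 / 4 :=
  stmt_14_general a b hcoef m p hm hp r hr0 hr1 hrle
end

section
/- Let (aₙ)_{n≥2}, (bₙ)_{n≥2} be sequences of complex numbers with |aₙ| + |bₙ| ≤ 1 for all n ≥ 2. Fix integers m, p ≥ 1 and a real r ∈ [0,1) satisfying r^m + r^p + (2r^{2m} - r^{3m})/(1 - r^m)² + r^{2p}/(1 - r^p) ≤ 1/2. Then r^m + ∑_{n≥2} n(|aₙ|+|bₙ|) r^{mn} + r^p + ∑_{n≥2}(|aₙ|+|bₙ|) r^{pn} ≤ 1/2. -/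
/-!
Since `‖aₙ‖ + ‖bₙ‖ ≤ 1`, both series are dominated termwise by the series with all coefficients
equal to `1`; with `x = r ^ m` and `y = r ^ p` these sum exactly to the two fractions in the
hypothesis, `∑ (n + 2) x ^ (n + 2) = (2x² - x³) / (1 - x)²` and `∑ y ^ (n + 2) = y² / (1 - y)`.
-/

open Finset

theorem hasSum_nat_add_two_mul_geometric {𝕜 : Type*} [NormedField 𝕜] [CompleteSpace 𝕜]
    {q : 𝕜} (hq : ‖q‖ < 1) :
    HasSum (fun n : ℕ ↦ ((n : 𝕜) + 2) * q ^ (n + 2)) ((2 * q ^ 2 - q ^ 3) / (1 - q) ^ 2) := by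
  have hq1 : 1 - q ≠ 0 := (isUnit_one_sub_of_norm_lt_one hq).ne_zero
  have hval : q / (1 - q) ^ 2 - ∑ i ∈ range 2, (i : 𝕜) * q ^ i
      = (2 * q ^ 2 - q ^ 3) / (1 - q) ^ 2 := by
    rw [eq_div_iff (pow_ne_zero 2 hq1), sub_mul, div_mul_cancel₀ _ (pow_ne_zero 2 hq1)]
    simp only [sum_range_succ, sum_range_zero]
    push_cast
    ring
  rw [← hval]
  exact_mod_cast (hasSum_nat_add_iff' (f := fun n : ℕ ↦ (n : 𝕜) * q ^ n) 2).2
    (hasSum_coe_mul_geometric_of_norm_lt_one hq)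

theorem hasSum_geometric_nat_add_two {𝕜 : Type*} [NormedField 𝕜] [CompleteSpace 𝕜] {q : 𝕜}
    (hq : ‖q‖ < 1) : HasSum (fun n : ℕ ↦ q ^ (n + 2)) (q ^ 2 / (1 - q)) := by
  simpa only [pow_add, mul_comm, div_eq_mul_inv] using
    (hasSum_geometric_of_norm_lt_one hq).mul_left (q ^ 2)

theorem tsum_mul_le_of_hasSum {ι : Type*} {c f : ι → ℝ} {s : ℝ} (hc0 : ∀ i, 0 ≤ c i)
    (hc1 : ∀ i, c i ≤ 1) (hf0 : ∀ i, 0 ≤ f i) (hf : HasSum f s) : ∑' i, c i * f i ≤ s := by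
  have hle : ∀ i, c i * f i ≤ f i := fun i ↦ mul_le_of_le_one_left (hf0 i) (hc1 i)
  exact hf.tsum_eq ▸ Summable.tsum_le_tsum hle
    (hf.summable.of_nonneg_of_le (fun i ↦ mul_nonneg (hc0 i) (hf0 i)) hle) hf.summable

theorem stmt_15 (a b : ℕ → ℂ)
    (hcoef : ∀ n : ℕ, 2 ≤ n → ‖a n‖ + ‖b n‖ ≤ 1)
    (m p : ℕ) (hm : 1 ≤ m) (hp : 1 ≤ p) (r : ℝ) (hr0 : 0 ≤ r) (hr1 : r < 1)
    (hrle : r ^ m + r ^ p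
        + (2 * r ^ (2 * m) - r ^ (3 * m)) / (1 - r ^ m) ^ 2
        + r ^ (2 * p) / (1 - r ^ p) ≤ 1 / 2) :
    r ^ m + (∑' n : ℕ, ((n + 2 : ℝ)) * (‖a (n + 2)‖ + ‖b (n + 2)‖) * r ^ (m * (n + 2)))
      + r ^ p + (∑' n : ℕ, (‖a (n + 2)‖ + ‖b (n + 2)‖) * r ^ (p * (n + 2))) ≤ 1 / 2 := by
  set c : ℕ → ℝ := fun n ↦ ‖a (n + 2)‖ + ‖b (n + 2)‖
  have hc0 : ∀ n, 0 ≤ c n := fun n ↦ by positivity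
  have hc1 : ∀ n, c n ≤ 1 := fun n ↦ hcoef (n + 2) (by omega)
  have norm_pow_lt_one {k : ℕ} (hk : 1 ≤ k) : ‖r ^ k‖ < 1 := by
    rw [norm_pow, Real.norm_of_nonneg hr0]
    exact pow_lt_one₀ hr0 hr1 (by omega)
  have hsum_m : ∑' n : ℕ, (n + 2 : ℝ) * c n * r ^ (m * (n + 2))
      ≤ (2 * r ^ (2 * m) - r ^ (3 * m)) / (1 - r ^ m) ^ 2 := by
    simp only [mul_comm _ (c _), mul_assoc, pow_mul, mul_comm 2 m, mul_comm 3 m]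
    exact tsum_mul_le_of_hasSum hc0 hc1 (fun n ↦ by positivity)
      (hasSum_nat_add_two_mul_geometric (norm_pow_lt_one hm))
  have hsum_p : ∑' n : ℕ, c n * r ^ (p * (n + 2)) ≤ r ^ (2 * p) / (1 - r ^ p) := by
    simp only [pow_mul, mul_comm 2 p]
    exact tsum_mul_le_of_hasSum hc0 hc1 (fun n ↦ by positivity)
      (hasSum_geometric_nat_add_two (norm_pow_lt_one hp))
  linarith
end

section
/- Fix integers m, p, N ≥ 1. The function G₇(r) = r^m(1 + 4r^m + r^{2m})/(1 - r^m)⁴ + r^{pN}(N + r^p - N r^p)/(1 - r^p)² - 1/4 is strictly increasing on (0,1), satisfies G₇(0) = -1/4 and tends to +∞ as r → 1⁻; hence it has a unique root in (0,1). -/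
/-!
With `A(x) = x(1 + 4x + x²)/(1 - x)⁴ = ∑_{k ≥ 1} k³ xᵏ` and
`B_N(x) = x^N (N + x - N x)/(1 - x)² = N x^N/(1 - x) + x^{N+1}/(1 - x)² = ∑_{k ≥ N} k xᵏ`,
we have `G₇(r) = A(r^m) + B_N(r^p) - 1/4`. On `[0, 1)` the function `A` is strictly increasing,
continuous and blows up at `1`, while `B_N` is nonnegative, continuous and nondecreasing. So `G₇`
is strictly increasing, tends to `+∞` at `1⁻`, and the intermediate value theorem gives a root,
which is unique by monotonicity.
-/

open Filter Set Topology

noncomputable def cubeGenFun (x : ℝ) : ℝ := x * (1 + 4 * x + x ^ 2) / (1 - x) ^ 4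

noncomputable def tailGenFun (N : ℕ) (x : ℝ) : ℝ := x ^ N * (N + x - N * x) / (1 - x) ^ 2

lemma cubeGenFun_zero : cubeGenFun 0 = 0 := by simp [cubeGenFun]

lemma strictMonoOn_cubeGenFun : StrictMonoOn cubeGenFun (Ico 0 1) := by
  rintro x ⟨hx0, -⟩ y ⟨-, hy1⟩ hxy
  have hy0 : 0 < y := hx0.trans_lt hxy
  have hy : 0 < 1 - y := by linarith
  unfold cubeGenFun
  gcongr ?_ / (1 - ?_) ^ 4
  exact mul_lt_mul'' hxy (by gcongr) hx0 (by positivity)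

lemma continuousOn_cubeGenFun : ContinuousOn cubeGenFun (Iio 1) := by
  intro x hx
  have : (1 - x) ^ 4 ≠ 0 := pow_ne_zero _ (sub_ne_zero.2 (ne_of_gt hx))
  unfold cubeGenFun
  fun_prop (disch := assumption)

lemma tendsto_cubeGenFun : Tendsto cubeGenFun (𝓝[<] 1) atTop := by
  have hnum : Tendsto (fun x : ℝ => x * (1 + 4 * x + x ^ 2)) (𝓝[<] 1) (𝓝 6) := by
    have : Continuous (fun x : ℝ => x * (1 + 4 * x + x ^ 2)) := by fun_prop
    convert (this.tendsto 1).mono_left nhdsWithin_le_nhds using 2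
    norm_num
  have hden : Tendsto (fun x : ℝ => (1 - x) ^ 4) (𝓝[<] 1) (𝓝[>] 0) := by
    refine tendsto_nhdsWithin_of_tendsto_nhds_of_eventually_within _ ?_ ?_
    · have : Continuous (fun x : ℝ => (1 - x) ^ 4) := by fun_prop
      convert (this.tendsto 1).mono_left nhdsWithin_le_nhds using 2
      norm_num
    · filter_upwards [self_mem_nhdsWithin] with x (hx : x < 1)
      exact pow_pos (sub_pos.2 hx) 4
  exact hnum.pos_mul_atTop (by norm_num) (tendsto_inv_nhdsGT_zero.comp hden)

lemma tailGenFun_zero (N : ℕ) : tailGenFun N 0 = 0 := by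
  cases N <;> simp [tailGenFun]

lemma tailGenFun_eq (N : ℕ) {x : ℝ} (hx : x ≠ 1) :
    tailGenFun N x = N * x ^ N / (1 - x) + x ^ (N + 1) / (1 - x) ^ 2 := by
  have : 1 - x ≠ 0 := sub_ne_zero.2 hx.symm
  unfold tailGenFun
  field_simp
  ring

lemma tailGenFun_nonneg (N : ℕ) {x : ℝ} (hx0 : 0 ≤ x) (hx1 : x < 1) :
    0 ≤ tailGenFun N x := by
  have : 0 < 1 - x := by linarith
  rw [tailGenFun_eq N hx1.ne]
  positivity

lemma monotoneOn_tailGenFun (N : ℕ) : MonotoneOn (tailGenFun N) (Ico 0 1) := by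
  rintro x ⟨hx0, hx1⟩ y ⟨hy0, hy1⟩ hxy
  have hy : 0 < 1 - y := by linarith
  rw [tailGenFun_eq N hx1.ne, tailGenFun_eq N hy1.ne]
  gcongr

lemma continuousOn_tailGenFun (N : ℕ) : ContinuousOn (tailGenFun N) (Iio 1) := by
  intro x hx
  have : (1 - x) ^ 2 ≠ 0 := pow_ne_zero _ (sub_ne_zero.2 (ne_of_gt hx))
  unfold tailGenFun
  fun_prop (disch := assumption)

lemma mapsTo_pow_Ico_zero_one {n : ℕ} (hn : n ≠ 0) :
    MapsTo (fun r : ℝ => r ^ n) (Ico 0 1) (Ico 0 1) :=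
  fun _ hr => ⟨pow_nonneg hr.1 n, pow_lt_one₀ hr.1 hr.2 hn⟩

lemma tendsto_pow_nhdsLT_one {n : ℕ} (hn : n ≠ 0) :
    Tendsto (fun r : ℝ => r ^ n) (𝓝[<] 1) (𝓝[<] 1) := by
  refine tendsto_nhdsWithin_of_tendsto_nhds_of_eventually_within _ ?_ ?_
  · convert ((continuous_pow n).tendsto (1 : ℝ)).mono_left nhdsWithin_le_nhds using 2
    simp
  · filter_upwards [Ioo_mem_nhdsLT (zero_lt_one' ℝ)] with r hr
    exact pow_lt_one₀ hr.1.le hr.2 hn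

lemma existsUnique_mem_Ioo_eq_zero {G : ℝ → ℝ} {a b : ℝ} (hab : a < b)
    (hcont : ContinuousOn G (Ico a b)) (hmono : StrictMonoOn G (Ioo a b)) (ha : G a < 0)
    (htop : Tendsto G (𝓝[<] b) atTop) : ∃! r, r ∈ Ioo a b ∧ G r = 0 := by
  obtain ⟨r₀, hr₀pos, hr₀⟩ :=
    ((htop.eventually_gt_atTop 0).and (Ioo_mem_nhdsLT hab)).exists
  obtain ⟨c, hc, hGc⟩ := intermediate_value_Icc hr₀.1.le
    (hcont.mono (Icc_subset_Ico_right hr₀.2)) ⟨ha.le, hr₀pos.le⟩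
  have hca : c ≠ a := by
    rintro rfl
    exact ha.ne hGc
  have hcmem : c ∈ Ioo a b := ⟨hc.1.lt_of_ne' hca, hc.2.trans_lt hr₀.2⟩
  refine ⟨c, ⟨hcmem, hGc⟩, ?_⟩
  rintro d ⟨hd, hGd⟩
  exact hmono.injOn hd hcmem (hGd.trans hGc.symm)

noncomputable def G₇ (m p N : ℕ) (r : ℝ) : ℝ :=
  cubeGenFun (r ^ m) + tailGenFun N (r ^ p) - 1 / 4

section G₇

variable {m p : ℕ} (N : ℕ)

lemma G₇_zero (hm : m ≠ 0) (hp : p ≠ 0) : G₇ m p N 0 = -1 / 4 := by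
  norm_num [G₇, zero_pow hm, zero_pow hp, cubeGenFun_zero, tailGenFun_zero]

lemma strictMonoOn_G₇ (hm : m ≠ 0) (hp : p ≠ 0) : StrictMonoOn (G₇ m p N) (Ico 0 1) := by
  have hA := strictMonoOn_cubeGenFun.comp ((pow_left_strictMonoOn₀ hm).mono fun _ hr => hr.1)
    (mapsTo_pow_Ico_zero_one hm)
  have hB := (monotoneOn_tailGenFun N).comp (pow_left_monotoneOn.mono fun _ hr => hr.1)
    (mapsTo_pow_Ico_zero_one hp)
  exact fun x hx y hy hxy =>
    sub_lt_sub_right (add_lt_add_of_lt_of_le (hA hx hy hxy) (hB hx hy hxy.le)) _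

lemma continuousOn_G₇ (hm : m ≠ 0) (hp : p ≠ 0) : ContinuousOn (G₇ m p N) (Ico 0 1) :=
  ((continuousOn_cubeGenFun.comp (continuous_pow m).continuousOn
      ((mapsTo_pow_Ico_zero_one hm).mono_right Ico_subset_Iio_self)).add
    ((continuousOn_tailGenFun N).comp (continuous_pow p).continuousOn
      ((mapsTo_pow_Ico_zero_one hp).mono_right Ico_subset_Iio_self))).sub continuousOn_const

lemma tendsto_G₇ (hm : m ≠ 0) (hp : p ≠ 0) : Tendsto (G₇ m p N) (𝓝[<] 1) atTop := by
  refine tendsto_atTop_mono' _ ?_ (tendsto_atTop_add_const_right _ (-1 / 4)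
    (tendsto_cubeGenFun.comp (tendsto_pow_nhdsLT_one hm)))
  filter_upwards [Ioo_mem_nhdsLT one_pos] with r hr
  obtain ⟨hrp0, hrp1⟩ : r ^ p ∈ Ico 0 1 := mapsTo_pow_Ico_zero_one hp ⟨hr.1.le, hr.2⟩
  simp only [G₇, Function.comp_apply]
  linarith [tailGenFun_nonneg N hrp0 hrp1]

end G₇

theorem stmt_18_general (m p N : ℕ) (hm : 1 ≤ m) (hp : 1 ≤ p) (G : ℝ → ℝ)
    (hG : ∀ r : ℝ, G r = r ^ m * (1 + 4 * r ^ m + r ^ (2 * m)) / (1 - r ^ m) ^ 4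
        + r ^ (p * N) * ((N : ℝ) + r ^ p - (N : ℝ) * r ^ p) / (1 - r ^ p) ^ 2 - 1 / 4) :
    StrictMonoOn G (Set.Ioo (0 : ℝ) 1) ∧
    G 0 = -1 / 4 ∧
    Tendsto G (nhdsWithin 1 (Set.Iio (1 : ℝ))) atTop ∧
    (∃! r : ℝ, r ∈ Set.Ioo (0 : ℝ) 1 ∧ G r = 0) := by
  replace hm : m ≠ 0 := Nat.one_le_iff_ne_zero.1 hm
  replace hp : p ≠ 0 := Nat.one_le_iff_ne_zero.1 hp
  obtain rfl : G = G₇ m p N := by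
    ext r
    rw [hG, G₇, cubeGenFun, tailGenFun, pow_mul', pow_mul]
  have hmono := (strictMonoOn_G₇ N hm hp).mono Ioo_subset_Ico_self
  have hzero := G₇_zero N hm hp
  have htop := tendsto_G₇ N hm hp
  refine ⟨hmono, hzero, htop, existsUnique_mem_Ioo_eq_zero one_pos (continuousOn_G₇ N hm hp)
    hmono ?_ htop⟩
  norm_num [hzero]

theorem stmt_18 (m p N : ℕ) (hm : 1 ≤ m) (hp : 1 ≤ p) (hN : 1 ≤ N) (G : ℝ → ℝ)
    (hG : ∀ r : ℝ, G r = r ^ m * (1 + 4 * r ^ m + r ^ (2 * m)) / (1 - r ^ m) ^ 4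
        + r ^ (p * N) * ((N : ℝ) + r ^ p - (N : ℝ) * r ^ p) / (1 - r ^ p) ^ 2 - 1 / 4) :
    StrictMonoOn G (Set.Ioo (0 : ℝ) 1) ∧
    G 0 = -1 / 4 ∧
    Tendsto G (nhdsWithin 1 (Set.Iio (1 : ℝ))) atTop ∧
    (∃! r : ℝ, r ∈ Set.Ioo (0 : ℝ) 1 ∧ G r = 0) :=
  stmt_18_general m p N hm hp G hG
end
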